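/- Let (U_n, F_n) be a martingale difference sequence and (V_n) a sequence of random variables having a common distribution with finite mean, such that V_n is independent of F_{n−1} and |U_n| ≤ V_n for all n. Then (1/n) Σ_{k=1}^n U_k → 0 almost surely. -/

import Mathlib

/-!
Truncate at the level of the index, `T k = truncation (U k) k`, and split
`U k = (T k - E[T k | F (k-1)]) + E[T k | F (k-1)] + (U k - T k)`.

* The centred truncations divided by `k` are orthogonal martingale differences whose second
  moments are at most `E[min (V 1) k ^ 2] / k ^ 2`, which is summable because `V 1` is
  integrable. Their partial sums form an `L²`-bounded martingale, hence converge a.s., and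
  Kronecker's lemma turns this into Cesàro convergence of the centred truncations to `0`.
* Since `E[U k | F (k-1)] = 0` and `V k` is independent of `F (k-1)`,
  `|E[T k | F (k-1)]| ≤ E[V 1; V 1 ≥ k] → 0`.
* `∑ P(V 1 > k) < ∞`, so by Borel–Cantelli `U k = T k` for all large `k`.
-/

open MeasureTheory Filter ProbabilityTheory
open scoped Topology

lemma Finset.sum_Icc_one_eq_sum_range {M : Type*} [AddCommMonoid M] (f : ℕ → M) (n : ℕ) :
    ∑ k ∈ Icc 1 n, f k = ∑ k ∈ range n, f (k + 1) := by
  rw [← Finset.Ico_add_one_right_eq_Icc, Finset.sum_Ico_eq_sum_range, Nat.add_sub_cancel]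
  simp only [add_comm]

lemma Filter.Tendsto.cesaro_Icc {c : ℕ → ℝ} {a : ℝ} (h : Tendsto c atTop (𝓝 a)) :
    Tendsto (fun n : ℕ => (n : ℝ)⁻¹ * ∑ k ∈ Finset.Icc 1 n, c k) atTop (𝓝 a) := by
  simp_rw [Finset.sum_Icc_one_eq_sum_range]
  exact (h.comp (tendsto_add_atTop_nat 1)).cesaro

lemma Filter.Tendsto.kronecker {a : ℕ → ℝ} {L : ℝ}
    (h : Tendsto (fun n : ℕ => ∑ k ∈ Finset.range n, ((k : ℝ) + 1)⁻¹ * a k) atTop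
      (𝓝 L)) :
    Tendsto (fun n : ℕ => (n : ℝ)⁻¹ * ∑ k ∈ Finset.range n, a k) atTop (𝓝 0) := by
  set b : ℕ → ℝ := fun n => ∑ k ∈ Finset.range n, ((k : ℝ) + 1)⁻¹ * a k
  have abel : ∀ n : ℕ,
      ∑ k ∈ Finset.range n, a k = n * b n - ∑ k ∈ Finset.range n, b k := by
    intro n
    induction n with
    | zero => simp [b]
    | succ n ih =>
      have hb : b (n + 1) = b n + ((n : ℝ) + 1)⁻¹ * a n := Finset.sum_range_succ _ _
      rw [Finset.sum_range_succ, ih, hb, Finset.sum_range_succ]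
      push_cast
      field_simp
      ring
  have hlim : Tendsto (fun n : ℕ => b n - (n : ℝ)⁻¹ * ∑ k ∈ Finset.range n, b k) atTop
      (𝓝 0) := by
    simpa using h.sub h.cesaro
  refine hlim.congr' ?_
  filter_upwards [eventually_ne_atTop 0] with n hn
  rw [abel, mul_sub, ← mul_assoc, inv_mul_cancel₀ (Nat.cast_ne_zero.2 hn), one_mul]

lemma Measurable.truncation {α : Type*} {m : MeasurableSpace α} {f : α → ℝ}
    (hf : Measurable f) (A : ℝ) : Measurable (truncation f A) :=
  (measurable_id.indicator measurableSet_Ioc).comp hf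

lemma abs_truncation_sub_self_le {α : Type*} {f g : α → ℝ} {x : α}
    (hfg : |f x| ≤ g x) (A : ℝ) :
    |truncation f A x - f x| ≤ (Set.Ici A).indicator id (g x) := by
  by_cases hf : f x ∈ Set.Ioc (-A) A
  · simp only [truncation, Function.comp_apply, Set.indicator_of_mem hf, id, sub_self, abs_zero]
    have hA : 0 < A := by linarith [hf.1, hf.2]
    exact Set.indicator_nonneg (fun y hy => hA.le.trans (Set.mem_Ici.1 hy)) _
  · have hA : A ≤ g x := by
      rw [Set.mem_Ioc, not_and_or, not_lt, not_le] at hf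
      rcases hf with hf | hf
      · linarith [neg_abs_le (f x)]
      · linarith [le_abs_self (f x)]
    simp [truncation, Set.indicator_of_notMem hf, Set.indicator_of_mem (Set.mem_Ici.2 hA), hfg]

lemma inv_sq_mul_min_sq_le {x : ℝ} (hx : 0 ≤ x) (k : ℕ) :
    ((k : ℝ) ^ 2)⁻¹ * min x k ^ 2
      ≤ ((k : ℝ) ^ 2)⁻¹ * (Set.Ioc (-(k : ℝ)) k).indicator id x ^ 2
        + (Set.Ioi (k : ℝ)).indicator 1 x := by
  have hind : 0 ≤ (Set.Ioi (k : ℝ)).indicator (1 : ℝ → ℝ) x :=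
    Set.indicator_nonneg (fun _ _ => zero_le_one) _
  rcases le_or_gt x k with hxk | hxk
  · rw [min_eq_left hxk]
    rcases eq_or_lt_of_le hx with rfl | hx
    · rw [zero_pow two_ne_zero, mul_zero]
      positivity
    have hmem : x ∈ Set.Ioc (-(k : ℝ)) k := ⟨by linarith, hxk⟩
    rw [Set.indicator_of_mem hmem, id]
    exact le_add_of_nonneg_right hind
  · have hk : ((k : ℝ) ^ 2)⁻¹ * (k : ℝ) ^ 2 ≤ 1 := by
      rcases eq_or_ne (k : ℝ) 0 with h | h
      · simp [h]
      · rw [inv_mul_cancel₀ (pow_ne_zero 2 h)]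
    simpa [min_eq_right hxk.le, Set.indicator_of_mem (Set.mem_Ioi.2 hxk),
      Set.indicator_of_notMem (fun h : x ∈ Set.Ioc _ _ => not_le.2 hxk h.2)] using hk

variable {Ω : Type*} {m0 : MeasurableSpace Ω} {μ : Measure Ω}

lemma MeasureTheory.Integrable.tendsto_integral_indicator_Ici {f : Ω → ℝ}
    (hf : Integrable f μ) :
    Tendsto (fun t : ℝ => ∫ ω, (Set.Ici t).indicator id (f ω) ∂μ) atTop (𝓝 0) := by
  have hlim : ∀ ω, Tendsto (fun t : ℝ => (Set.Ici t).indicator id (f ω)) atTop (𝓝 0) := by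
    intro ω
    refine tendsto_const_nhds.congr' ?_
    filter_upwards [eventually_gt_atTop (f ω)] with t ht
    exact (Set.indicator_of_notMem (not_le.2 ht) _).symm
  simpa using tendsto_integral_filter_of_dominated_convergence (fun ω => ‖f ω‖)
    (.of_forall fun t => ((measurable_id.indicator measurableSet_Ici).comp_aemeasurable
      hf.aemeasurable).aestronglyMeasurable)
    (.of_forall fun t => ae_of_all _ fun ω => norm_indicator_le_norm_self _ _)
    hf.norm (ae_of_all _ hlim)

lemma summable_inv_sq_mul_integral_min_sq [IsProbabilityMeasure μ] {X : Ω → ℝ}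
    (hint : Integrable X μ) (hnonneg : 0 ≤ X) :
    Summable (fun k : ℕ => ((k : ℝ) ^ 2)⁻¹ * ∫ ω, min (X ω) k ^ 2 ∂μ) := by
  let : MeasureSpace Ω := ⟨μ⟩
  have htrunc :
      Summable (fun k : ℕ => ((k : ℝ) ^ 2)⁻¹ * ∫ ω, truncation X k ω ^ 2 ∂μ) :=
    summable_of_sum_range_le (fun k => by positivity) (sum_variance_truncation_le hint hnonneg)
  have htail : Summable (fun k : ℕ => μ.real {ω | X ω ∈ Set.Ioi (k : ℝ)}) :=
    ENNReal.summable_toReal (tsum_prob_mem_Ioi_lt_top hint hnonneg).ne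
  refine Summable.of_nonneg_of_le (fun k => by positivity) (fun k => ?_) (htrunc.add htail)
  have hmeas : NullMeasurableSet {ω | X ω ∈ Set.Ioi (k : ℝ)} μ :=
    hint.aemeasurable.nullMeasurable measurableSet_Ioi
  have hbound : ∀ ω, ((k : ℝ) ^ 2)⁻¹ * min (X ω) k ^ 2
      ≤ ((k : ℝ) ^ 2)⁻¹ * truncation X k ω ^ 2
        + {ω | X ω ∈ Set.Ioi (k : ℝ)}.indicator 1 ω :=
    fun ω => inv_sq_mul_min_sq_le (hnonneg ω) k
  have hint_ind : Integrable ({ω | X ω ∈ Set.Ioi (k : ℝ)}.indicator (1 : Ω → ℝ)) μ :=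
    (integrable_const 1).indicator₀ hmeas
  have hint_trunc : Integrable (fun ω => truncation X k ω ^ 2) μ :=
    (hint.1.memLp_truncation (p := 2)).integrable_sq
  calc ((k : ℝ) ^ 2)⁻¹ * ∫ ω, min (X ω) k ^ 2 ∂μ
      = ∫ ω, ((k : ℝ) ^ 2)⁻¹ * min (X ω) k ^ 2 ∂μ := (integral_const_mul _ _).symm
    _ ≤ ∫ ω, (((k : ℝ) ^ 2)⁻¹ * truncation X k ω ^ 2
          + {ω | X ω ∈ Set.Ioi (k : ℝ)}.indicator 1 ω) ∂μ :=
      integral_mono_of_nonneg (ae_of_all _ fun ω => by positivity)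
        ((hint_trunc.const_mul _).add hint_ind) (ae_of_all _ hbound)
    _ = _ := by
      rw [integral_add (hint_trunc.const_mul _) hint_ind,
        integral_const_mul, integral_indicator₀ hmeas]
      simp

lemma ae_eventually_lt_of_identDistrib [IsProbabilityMeasure μ] {V : ℕ → Ω → ℝ}
    (hident : ∀ n, 1 ≤ n → IdentDistrib (V n) (V 1) μ μ) (hint : Integrable (V 1) μ)
    (hnonneg : 0 ≤ V 1) :
    ∀ᵐ ω ∂μ, ∀ᶠ n : ℕ in atTop, V n ω < n := by
  let : MeasureSpace Ω := ⟨μ⟩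
  have hsum : ∑' n : ℕ, μ (V (n + 1) ⁻¹' Set.Ioi (n : ℝ)) ≠ ⊤ := by
    rw [tsum_congr fun n => (hident (n + 1) n.succ_pos).measure_mem_eq measurableSet_Ioi]
    exact (tsum_prob_mem_Ioi_lt_top hint hnonneg).ne
  filter_upwards [ae_eventually_notMem hsum] with ω hω
  filter_upwards [(tendsto_sub_atTop_nat 1).eventually hω, eventually_ge_atTop 1] with n hn hn1
  simp only [Set.mem_preimage, Set.mem_Ioi, not_lt, Nat.sub_add_cancel hn1] at hn
  exact hn.trans_lt (by exact_mod_cast Nat.sub_lt hn1 one_pos)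

lemma condExp_sub_condExp_ae_eq_zero {m : MeasurableSpace Ω} (hm : m ≤ m0)
    [SigmaFinite (μ.trim hm)] {f : Ω → ℝ} (hf : Integrable f μ) :
    μ[f - μ[f | m] | m] =ᵐ[μ] 0 := by
  filter_upwards [condExp_sub hf integrable_condExp m] with ω hω
  rw [hω, condExp_of_stronglyMeasurable hm stronglyMeasurable_condExp integrable_condExp]
  simp

lemma integral_sub_condExp_sq_le {m : MeasurableSpace Ω} (hm : m ≤ m0) [IsFiniteMeasure μ]
    {X : Ω → ℝ} (hX : MemLp X 2 μ) :
    ∫ ω, (X ω - μ[X | m] ω) ^ 2 ∂μ ≤ ∫ ω, X ω ^ 2 ∂μ :=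
  calc ∫ ω, (X ω - μ[X | m] ω) ^ 2 ∂μ
      = ∫ ω, Var[X; μ | m] ω ∂μ := (integral_condExp hm).symm
    _ ≤ ∫ ω, μ[X ^ 2 | m] ω ∂μ :=
      integral_mono_ae integrable_condVar integrable_condExp (condVar_ae_le_condExp_sq hm hX)
    _ = ∫ ω, X ω ^ 2 ∂μ := integral_condExp hm

lemma integral_mul_eq_zero_of_condExp_eq_zero {m : MeasurableSpace Ω} (hm : m ≤ m0)
    [IsFiniteMeasure μ] {Y Z : Ω → ℝ} (hZ : StronglyMeasurable[m] Z) (hZ2 : MemLp Z 2 μ)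
    (hY2 : MemLp Y 2 μ) (hY : μ[Y | m] =ᵐ[μ] 0) :
    ∫ ω, Z ω * Y ω ∂μ = 0 :=
  calc ∫ ω, Z ω * Y ω ∂μ = ∫ ω, μ[Z * Y | m] ω ∂μ := (integral_condExp hm).symm
    _ = ∫ ω, (Z * μ[Y | m]) ω ∂μ := integral_congr_ae <|
      condExp_mul_of_stronglyMeasurable_left hZ (hZ2.integrable_mul hY2)
        (hY2.integrable one_le_two)
    _ = 0 := by
      rw [← integral_zero Ω ℝ]
      refine integral_congr_ae ?_
      filter_upwards [hY] with ω hω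
      simp [hω]

lemma eLpNorm_one_le_measureReal_add_integral_sq [IsFiniteMeasure μ] {f : Ω → ℝ}
    (hf : MemLp f 2 μ) :
    eLpNorm f 1 μ ≤ ENNReal.ofReal (μ.real Set.univ + ∫ ω, f ω ^ 2 ∂μ) := by
  rw [eLpNorm_one_eq_lintegral_enorm,
    ← ofReal_integral_norm_eq_lintegral_enorm (hf.integrable one_le_two)]
  refine ENNReal.ofReal_le_ofReal ?_
  calc ∫ ω, ‖f ω‖ ∂μ ≤ ∫ ω, (1 + f ω ^ 2) ∂μ :=
        integral_mono (hf.integrable one_le_two).norm ((integrable_const 1).add hf.integrable_sq)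
          fun ω => by nlinarith [sq_nonneg (|f ω| - 1), sq_abs (f ω), Real.norm_eq_abs (f ω)]
    _ = μ.real Set.univ + ∫ ω, f ω ^ 2 ∂μ := by
      rw [integral_add (integrable_const 1) hf.integrable_sq, integral_const, smul_eq_mul, mul_one]

section MartingaleDifference

variable [IsFiniteMeasure μ] {F : Filtration ℕ m0} {Y : ℕ → Ω → ℝ}

lemma stronglyMeasurable_sum_range (hmeas : ∀ k, StronglyMeasurable[F (k + 1)] (Y k)) (n : ℕ) :
    StronglyMeasurable[F n] (fun ω => ∑ k ∈ Finset.range n, Y k ω) :=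
  Finset.stronglyMeasurable_fun_sum _ fun k hk =>
    (hmeas k).mono (F.mono (Finset.mem_range.1 hk))

lemma integral_sq_sum_range_eq_sum_integral_sq
    (hmeas : ∀ k, StronglyMeasurable[F (k + 1)] (Y k)) (hL2 : ∀ k, MemLp (Y k) 2 μ)
    (hmds : ∀ k, μ[Y k | F k] =ᵐ[μ] 0) (n : ℕ) :
    ∫ ω, (∑ k ∈ Finset.range n, Y k ω) ^ 2 ∂μ
      = ∑ k ∈ Finset.range n, ∫ ω, Y k ω ^ 2 ∂μ := by
  induction n with
  | zero => simp
  | succ n ih =>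
    have hS2 : MemLp (fun ω => ∑ k ∈ Finset.range n, Y k ω) 2 μ :=
      memLp_finsetSum _ fun k _ => hL2 k
    have hSY : Integrable (fun ω => (∑ k ∈ Finset.range n, Y k ω) * Y n ω) μ :=
      hS2.integrable_mul (hL2 n)
    have hS2Y : Integrable (fun ω => (∑ k ∈ Finset.range n, Y k ω) ^ 2
        + 2 * ((∑ k ∈ Finset.range n, Y k ω) * Y n ω)) μ :=
      hS2.integrable_sq.add (hSY.const_mul 2)
    have hcross : ∫ ω, (∑ k ∈ Finset.range n, Y k ω) * Y n ω ∂μ = 0 :=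
      integral_mul_eq_zero_of_condExp_eq_zero (F.le n) (stronglyMeasurable_sum_range hmeas n)
        hS2 (hL2 n) (hmds n)
    calc ∫ ω, (∑ k ∈ Finset.range (n + 1), Y k ω) ^ 2 ∂μ
        = ∫ ω, ((∑ k ∈ Finset.range n, Y k ω) ^ 2
            + 2 * ((∑ k ∈ Finset.range n, Y k ω) * Y n ω) + Y n ω ^ 2) ∂μ := by
          simp_rw [Finset.sum_range_succ, add_sq, mul_assoc]
      _ = ∫ ω, (∑ k ∈ Finset.range n, Y k ω) ^ 2 ∂μ
            + 2 * ∫ ω, (∑ k ∈ Finset.range n, Y k ω) * Y n ω ∂μ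
            + ∫ ω, Y n ω ^ 2 ∂μ := by
          rw [integral_add hS2Y (hL2 n).integrable_sq,
            integral_add hS2.integrable_sq (hSY.const_mul 2), integral_const_mul]
      _ = _ := by rw [ih, hcross, Finset.sum_range_succ]; ring

theorem ae_tendsto_sum_range_of_summable_integral_sq
    (hmeas : ∀ k, StronglyMeasurable[F (k + 1)] (Y k)) (hL2 : ∀ k, MemLp (Y k) 2 μ)
    (hmds : ∀ k, μ[Y k | F k] =ᵐ[μ] 0) (hsum : Summable fun k => ∫ ω, Y k ω ^ 2 ∂μ) :
    ∀ᵐ ω ∂μ, ∃ c, Tendsto (fun n => ∑ k ∈ Finset.range n, Y k ω) atTop (𝓝 c) := by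
  have hM2 : ∀ n, MemLp (fun ω => ∑ k ∈ Finset.range n, Y k ω) 2 μ :=
    fun n => memLp_finsetSum _ fun k _ => hL2 k
  have hmart : Martingale (fun n ω => ∑ k ∈ Finset.range n, Y k ω) F μ := by
    refine martingale_of_condExp_sub_eq_zero_nat (stronglyMeasurable_sum_range hmeas)
      (fun n => (hM2 n).integrable one_le_two) fun n => ?_
    have hdiff : (fun ω => ∑ k ∈ Finset.range (n + 1), Y k ω)
        - (fun ω => ∑ k ∈ Finset.range n, Y k ω) = Y n := by
      ext ω
      simp [Finset.sum_range_succ]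
    rw [hdiff]
    exact hmds n
  refine hmart.submartingale.exists_ae_tendsto_of_bdd
    (R := (μ.real Set.univ + ∑' k, ∫ ω, Y k ω ^ 2 ∂μ).toNNReal) fun n => ?_
  refine (eLpNorm_one_le_measureReal_add_integral_sq (hM2 n)).trans
    (ENNReal.ofReal_le_ofReal ?_)
  rw [integral_sq_sum_range_eq_sum_integral_sq hmeas hL2 hmds]
  gcongr
  exact hsum.sum_le_tsum _ fun k _ => integral_nonneg fun ω => sq_nonneg _

end MartingaleDifference

section DominatedMartingaleDifference

variable [IsProbabilityMeasure μ] {F : Filtration ℕ m0} {U V : ℕ → Ω → ℝ}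

lemma integral_sq_truncation_sub_condExp_le (hUmeas : ∀ n, 1 ≤ n → Measurable[F n] (U n))
    (hVident : ∀ n, 1 ≤ n → IdentDistrib (V n) (V 1) μ μ)
    (hdom : ∀ n, 1 ≤ n → ∀ ω, |U n ω| ≤ V n ω) {k : ℕ} (hk : 1 ≤ k) :
    ∫ ω, (truncation (U k) k ω - μ[truncation (U k) k | F (k - 1)] ω) ^ 2 ∂μ
      ≤ ∫ ω, min (V 1 ω) k ^ 2 ∂μ := by
  have hφ : Measurable fun x : ℝ => min x k ^ 2 := by fun_prop
  have hmin : ∀ ω, 0 ≤ min (V k ω) k := fun ω =>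
    le_min ((abs_nonneg _).trans (hdom k hk ω)) k.cast_nonneg
  have hT : ∀ ω, truncation (U k) k ω ^ 2 ≤ min (V k ω) k ^ 2 := fun ω => by
    rw [← sq_abs]
    refine pow_le_pow_left₀ (abs_nonneg _) (le_min ?_ ?_) 2
    · exact (abs_truncation_le_abs_self _ _ _).trans (hdom k hk ω)
    · simpa using abs_truncation_le_bound (U k) k ω
  have hint : Integrable (fun ω => min (V k ω) k ^ 2) μ :=
    Integrable.of_bound
      (hφ.comp_aemeasurable (hVident k hk).aemeasurable_fst).aestronglyMeasurable
      ((k : ℝ) ^ 2) (ae_of_all _ fun ω => by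
        rw [Real.norm_eq_abs, abs_pow, abs_of_nonneg (hmin ω)]
        exact pow_le_pow_left₀ (hmin ω) (min_le_right _ _) 2)
  calc ∫ ω, (truncation (U k) k ω - μ[truncation (U k) k | F (k - 1)] ω) ^ 2 ∂μ
      ≤ ∫ ω, truncation (U k) k ω ^ 2 ∂μ :=
        integral_sub_condExp_sq_le (F.le _)
          ((hUmeas k hk).mono (F.le k) le_rfl).aestronglyMeasurable.memLp_truncation
    _ ≤ ∫ ω, min (V k ω) k ^ 2 ∂μ :=
        integral_mono_of_nonneg (ae_of_all _ fun ω => sq_nonneg _) hint (ae_of_all _ hT)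
    _ = ∫ ω, min (V 1 ω) k ^ 2 ∂μ := ((hVident k hk).comp hφ).integral_eq

lemma ae_tendsto_inv_mul_sum_truncation_sub_condExp
    (hUmeas : ∀ n, 1 ≤ n → Measurable[F n] (U n))
    (hVident : ∀ n, 1 ≤ n → IdentDistrib (V n) (V 1) μ μ) (hVint : Integrable (V 1) μ)
    (hdom : ∀ n, 1 ≤ n → ∀ ω, |U n ω| ≤ V n ω) :
    ∀ᵐ ω ∂μ, Tendsto (fun n : ℕ => (n : ℝ)⁻¹ * ∑ k ∈ Finset.Icc 1 n,
      (truncation (U k) k ω - μ[truncation (U k) k | F (k - 1)] ω)) atTop (𝓝 0) := by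
  set X : ℕ → Ω → ℝ := fun k => truncation (U k) k - μ[truncation (U k) k | F (k - 1)]
  have hT2 : ∀ k, 1 ≤ k → MemLp (truncation (U k) k) 2 μ := fun k hk =>
    ((hUmeas k hk).mono (F.le k) le_rfl).aestronglyMeasurable.memLp_truncation
  have hX2 : ∀ k, 1 ≤ k → MemLp (X k) 2 μ := fun k hk =>
    (hT2 k hk).sub ((hT2 k hk).condExp one_le_two)
  -- the increments of `∑ X k / k`, indexed from `0`
  set Y : ℕ → Ω → ℝ := fun j => ((j : ℝ) + 1)⁻¹ • X (j + 1)
  have hY_meas : ∀ j, StronglyMeasurable[F (j + 1)] (Y j) := fun j =>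
    ((((hUmeas (j + 1) j.succ_pos).truncation _).stronglyMeasurable.sub
      (stronglyMeasurable_condExp.mono (F.mono (Nat.sub_le _ 1)))).const_smul _)
  have hY_mds : ∀ j, μ[Y j | F j] =ᵐ[μ] 0 := fun j => by
    have hXj : X (j + 1) = truncation (U (j + 1)) (j + 1 : ℕ)
        - μ[truncation (U (j + 1)) (j + 1 : ℕ) | F j] := by
      simp only [X, Nat.add_sub_cancel]
    filter_upwards [condExp_smul ((j : ℝ) + 1)⁻¹ (X (j + 1)) (F j), hXj ▸
      condExp_sub_condExp_ae_eq_zero (F.le j) ((hT2 (j + 1) j.succ_pos).integrable one_le_two)]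
      with ω h1 h2
    simp [Y, h1, h2]
  have hY_sum : Summable fun j => ∫ ω, Y j ω ^ 2 ∂μ := by
    have hV1 : 0 ≤ V 1 := fun ω => (abs_nonneg _).trans (hdom 1 le_rfl ω)
    refine Summable.of_nonneg_of_le (fun j => integral_nonneg fun ω => sq_nonneg _)
      (fun j => ?_) ((summable_nat_add_iff 1).2 (summable_inv_sq_mul_integral_min_sq hVint hV1))
    have hXj := integral_sq_truncation_sub_condExp_le hUmeas hVident hdom j.succ_pos
    calc ∫ ω, Y j ω ^ 2 ∂μ
        = (((j + 1 : ℕ) : ℝ) ^ 2)⁻¹ * ∫ ω, X (j + 1) ω ^ 2 ∂μ := by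
          rw [← integral_const_mul]
          simp [Y, mul_pow, inv_pow]
      _ ≤ _ := mul_le_mul_of_nonneg_left hXj (by positivity)
  filter_upwards [ae_tendsto_sum_range_of_summable_integral_sq hY_meas
    (fun j => (hX2 (j + 1) j.succ_pos).const_smul _) hY_mds hY_sum] with ω ⟨L, hL⟩
  simp_rw [Finset.sum_Icc_one_eq_sum_range]
  exact Tendsto.kronecker (a := fun k => X (k + 1) ω) hL

lemma ae_abs_condExp_truncation_le (hUmeas : ∀ n, 1 ≤ n → Measurable[F n] (U n))
    (hUint : ∀ n, 1 ≤ n → Integrable (U n) μ)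
    (hmgd : ∀ n, 1 ≤ n → μ[U n | F (n - 1)] =ᵐ[μ] 0)
    (hVmeas : ∀ n, 1 ≤ n → Measurable (V n))
    (hVident : ∀ n, 1 ≤ n → IdentDistrib (V n) (V 1) μ μ) (hVint : Integrable (V 1) μ)
    (hVindep : ∀ n, 1 ≤ n → Indep (MeasurableSpace.comap (V n) inferInstance) (F (n - 1)) μ)
    (hdom : ∀ n, 1 ≤ n → ∀ ω, |U n ω| ≤ V n ω) {k : ℕ} (hk : 1 ≤ k) :
    ∀ᵐ ω ∂μ, |μ[truncation (U k) k | F (k - 1)] ω|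
      ≤ ∫ ω, (Set.Ici (k : ℝ)).indicator id (V 1 ω) ∂μ := by
  set T := truncation (U k) k
  set W : Ω → ℝ := fun ω => (Set.Ici (k : ℝ)).indicator id (V k ω)
  have hφ : Measurable ((Set.Ici (k : ℝ)).indicator (id : ℝ → ℝ)) :=
    measurable_id.indicator measurableSet_Ici
  have hT : Integrable T μ :=
    ((hUmeas k hk).mono (F.le k) le_rfl).aestronglyMeasurable.integrable_truncation
  have hTU : Integrable (T - U k) μ := hT.sub (hUint k hk)
  have hW : Integrable W μ :=
    ((hVident k hk).integrable_iff.2 hVint).mono (hφ.comp (hVmeas k hk)).aestronglyMeasurable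
      (ae_of_all _ fun ω => norm_indicator_le_norm_self _ _)
  have hTU_le : |T - U k| ≤ᵐ[μ] W :=
    ae_of_all _ fun ω => abs_truncation_sub_self_le (hdom k hk ω) k
  have hW_indep : μ[W | F (k - 1)] =ᵐ[μ] fun _ => ∫ ω, W ω ∂μ :=
    condExp_indep_eq (hVmeas k hk).comap_le (F.le _)
      (hφ.comp (Measurable.of_comap_le le_rfl)).stronglyMeasurable (hVindep k hk)
  have hW_eq : ∫ ω, W ω ∂μ = ∫ ω, (Set.Ici (k : ℝ)).indicator id (V 1 ω) ∂μ :=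
    ((hVident k hk).comp hφ).integral_eq
  filter_upwards [condExp_sub hT (hUint k hk) (F (k - 1)), hmgd k hk,
    abs_condExp_ae_le_condExp_abs (m := F (k - 1)) (T - U k),
    condExp_mono (m := F (k - 1)) hTU.abs hW hTU_le, hW_indep]
    with ω h_sub h_mgd h_abs h_mono h_W
  simp only [Pi.sub_apply, h_mgd, Pi.zero_apply, sub_zero] at h_sub
  rw [← hW_eq, ← h_W, ← h_sub]
  exact h_abs.trans h_mono

lemma ae_tendsto_inv_mul_sum_condExp_truncation
    (hUmeas : ∀ n, 1 ≤ n → Measurable[F n] (U n))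
    (hUint : ∀ n, 1 ≤ n → Integrable (U n) μ)
    (hmgd : ∀ n, 1 ≤ n → μ[U n | F (n - 1)] =ᵐ[μ] 0)
    (hVmeas : ∀ n, 1 ≤ n → Measurable (V n))
    (hVident : ∀ n, 1 ≤ n → IdentDistrib (V n) (V 1) μ μ) (hVint : Integrable (V 1) μ)
    (hVindep : ∀ n, 1 ≤ n → Indep (MeasurableSpace.comap (V n) inferInstance) (F (n - 1)) μ)
    (hdom : ∀ n, 1 ≤ n → ∀ ω, |U n ω| ≤ V n ω) :
    ∀ᵐ ω ∂μ, Tendsto (fun n : ℕ => (n : ℝ)⁻¹ * ∑ k ∈ Finset.Icc 1 n,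
      μ[truncation (U k) k | F (k - 1)] ω) atTop (𝓝 0) := by
  set c : ℕ → ℝ := fun k => ∫ ω, (Set.Ici (k : ℝ)).indicator id (V 1 ω) ∂μ
  have hc : Tendsto c atTop (𝓝 0) :=
    hVint.tendsto_integral_indicator_Ici.comp tendsto_natCast_atTop_atTop
  have hbound :
      ∀ᵐ ω ∂μ, ∀ k, 1 ≤ k → |μ[truncation (U k) k | F (k - 1)] ω| ≤ c k :=
    ae_all_iff.2 fun k => eventually_imp_distrib_left.2 fun hk =>
      ae_abs_condExp_truncation_le hUmeas hUint hmgd hVmeas hVident hVint hVindep hdom hk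
  filter_upwards [hbound] with ω hω
  refine squeeze_zero_norm (fun n => ?_) hc.cesaro_Icc
  rw [norm_mul, norm_inv, Real.norm_natCast]
  gcongr
  exact (norm_sum_le _ _).trans (Finset.sum_le_sum fun k hk => hω k (Finset.mem_Icc.1 hk).1)

lemma ae_tendsto_inv_mul_sum_sub_truncation
    (hVident : ∀ n, 1 ≤ n → IdentDistrib (V n) (V 1) μ μ) (hVint : Integrable (V 1) μ)
    (hdom : ∀ n, 1 ≤ n → ∀ ω, |U n ω| ≤ V n ω) :
    ∀ᵐ ω ∂μ, Tendsto (fun n : ℕ => (n : ℝ)⁻¹ * ∑ k ∈ Finset.Icc 1 n,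
      (U k ω - truncation (U k) k ω)) atTop (𝓝 0) := by
  have hV1 : 0 ≤ V 1 := fun ω => (abs_nonneg _).trans (hdom 1 le_rfl ω)
  filter_upwards [ae_eventually_lt_of_identDistrib hVident hVint hV1] with ω hω
  refine Tendsto.cesaro_Icc (tendsto_const_nhds.congr' ?_)
  filter_upwards [hω, eventually_ge_atTop 1] with k hk hk1
  rw [truncation_eq_self ((hdom k hk1 ω).trans_lt hk), sub_self]

end DominatedMartingaleDifference

/-- **Proposition (SLLN for dominated martingale differences).**
If `(U_n, F_n)` is a martingale difference sequence dominated by random variables `(V_n)`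
with a common distribution with finite mean, each `V_n` independent of `F_{n−1}`, then
`(1/n) Σ_{k=1}^n U_k → 0` almost surely. -/
theorem mds_slln
    {Ω : Type} {m0 : MeasurableSpace Ω} {μ : Measure Ω} [IsProbabilityMeasure μ]
    (F : Filtration ℕ m0)
    (U : ℕ → Ω → ℝ)
    (hUmeas : ∀ n, 1 ≤ n → Measurable[F n] (U n))
    (hUint : ∀ n, 1 ≤ n → Integrable (U n) μ)
    (hmgd : ∀ n, 1 ≤ n → μ[U n | F (n-1)] =ᵐ[μ] 0)
    (V : ℕ → Ω → ℝ) (hVmeas : ∀ n, 1 ≤ n → Measurable (V n))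
    (hVident : ∀ n, 1 ≤ n → IdentDistrib (V n) (V 1) μ μ)
    (hVint : Integrable (V 1) μ)
    (hVindep : ∀ n, 1 ≤ n →
      Indep (MeasurableSpace.comap (V n) inferInstance) (F (n-1)) μ)
    (hdom : ∀ n, 1 ≤ n → ∀ ω, |U n ω| ≤ V n ω) :
    ∀ᵐ ω ∂μ, Tendsto (fun n : ℕ => (n : ℝ)⁻¹ * ∑ k ∈ Finset.Icc 1 n, U k ω)
      atTop (𝓝 0) := by
  filter_upwards [ae_tendsto_inv_mul_sum_truncation_sub_condExp hUmeas hVident hVint hdom,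
    ae_tendsto_inv_mul_sum_condExp_truncation hUmeas hUint hmgd hVmeas hVident hVint hVindep hdom,
    ae_tendsto_inv_mul_sum_sub_truncation hVident hVint hdom] with ω h_centred h_drift h_tail
  have h := (h_centred.add h_drift).add h_tail
  rw [add_zero, add_zero] at h
  refine h.congr fun n => ?_
  rw [← mul_add, ← mul_add, ← Finset.sum_add_distrib, ← Finset.sum_add_distrib]
  congr 1
  exact Finset.sum_congr rfl fun k _ => by ring
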